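/- Let x_k = (1/k)e_k and y_k = e_1 + (1/k)e_k in ℓ¹, and let (z_k) be the interleaved sequence x_1, y_1, x_2, y_2, …. Then every weak* cluster point of (z_k) in (ℓ¹)** belongs to ℓ¹ (so d̂(clust(z_k), ℓ¹) = 0), yet δ_{ℓ¹}(z_k) ≥ 1. -/

import Mathlib

/-
The sequence interleaves `x_k → 0` and `y_k → e_1`, both norm-convergent in `ℓ¹`. The canonical
embedding `ℓ¹ → (ℓ¹)**` is continuous into the weak* topology, so the even and odd subsequences
of `(z_k)` converge weak* to `0` and `e_1`, and since every tail of `ℕ` is covered by its even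
and odd parts, these two limits are the only weak* cluster points. Both lie in `ℓ¹`, while
`‖e_1 - 0‖ = 1` gives the lower bound on the diameter.
-/

open Filter Topology NormedSpace

/-- The set of weak* cluster points in the bidual of a sequence `(x k)` in `X`. -/
def weakStarClusterPoints {X : Type*} [NormedAddCommGroup X] [NormedSpace ℝ X]
    (x : ℕ → X) : Set (StrongDual ℝ (StrongDual ℝ X)) :=
  {y | MapClusterPt (StrongDual.toWeakDual y) atTop
        fun k => StrongDual.toWeakDual (inclusionInDoubleDual ℝ X (x k))}

/-- `d̂(A, X) = sup_{a ∈ A} dist (a, X)`. -/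
noncomputable def dHat {X : Type*} [NormedAddCommGroup X] [NormedSpace ℝ X]
    (A : Set (StrongDual ℝ (StrongDual ℝ X))) : ℝ :=
  sSup ((fun y => Metric.infDist y (Set.range fun v : X => inclusionInDoubleDual ℝ X v)) '' A)

/-- `x_k = (1/k) e_k` in `ℓ¹` (here `0`-indexed: `(1/(k+1)) e_k`). -/
noncomputable def xSeq : ℕ → lp (fun _ : ℕ => ℝ) 1 := fun k =>
  (1 / (k + 1 : ℝ)) • lp.single 1 k (1 : ℝ)

/-- `y_k = e_1 + (1/k) e_k` in `ℓ¹` (here `0`-indexed: `e_0 + (1/(k+1)) e_k`). -/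
noncomputable def ySeq : ℕ → lp (fun _ : ℕ => ℝ) 1 := fun k =>
  lp.single 1 0 (1 : ℝ) + (1 / (k + 1 : ℝ)) • lp.single 1 k (1 : ℝ)

/-- The interleaved sequence `x_1, y_1, x_2, y_2, …`. -/
noncomputable def zSeq : ℕ → lp (fun _ : ℕ => ℝ) 1 := fun k =>
  if k % 2 = 0 then xSeq (k / 2) else ySeq (k / 2)

section Interleave

variable {X : Type*} [TopologicalSpace X] [T2Space X] {u : ℕ → X} {a b : X}

lemma atTop_le_map_two_mul_sup_map_two_mul_add_one :
    (atTop : Filter ℕ) ≤ map (2 * ·) atTop ⊔ map (2 * · + 1) atTop := by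
  rintro s ⟨heven, hodd⟩
  refine Eventually.atTop_of_arithmetic two_ne_zero fun k hk => ?_
  interval_cases k
  exacts [heven, hodd]

lemma mapClusterPt_atTop_iff_of_tendsto_two_mul
    (heven : Tendsto (fun k => u (2 * k)) atTop (𝓝 a))
    (hodd : Tendsto (fun k => u (2 * k + 1)) atTop (𝓝 b)) {x : X} :
    MapClusterPt x atTop u ↔ x = a ∨ x = b := by
  constructor
  · intro hx
    have hle : map u atTop ≤ 𝓝 a ⊔ 𝓝 b :=
      calc map u atTop
          ≤ map u (map (2 * ·) atTop ⊔ map (2 * · + 1) atTop) :=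
            map_mono atTop_le_map_two_mul_sup_map_two_mul_add_one
        _ = map (fun k => u (2 * k)) atTop ⊔ map (fun k => u (2 * k + 1)) atTop := by
            rw [map_sup, map_map, map_map]; rfl
        _ ≤ 𝓝 a ⊔ 𝓝 b := sup_le_sup heven hodd
    rcases clusterPt_sup.1 (ClusterPt.mono hx hle) with ha | hb
    exacts [.inl (eq_of_nhds_neBot ha.neBot), .inr (eq_of_nhds_neBot hb.neBot)]
  · rintro (rfl | rfl)
    · exact heven.mapClusterPt.of_comp
        (tendsto_atTop_mono (fun n => show n ≤ 2 * n by omega) tendsto_id)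
    · exact hodd.mapClusterPt.of_comp
        (tendsto_atTop_mono (fun n => show n ≤ 2 * n + 1 by omega) tendsto_id)

end Interleave

section WeakStar

variable {X : Type*} [NormedAddCommGroup X] [NormedSpace ℝ X]

lemma continuous_toWeakDual_inclusionInDoubleDual :
    Continuous fun v : X => StrongDual.toWeakDual (inclusionInDoubleDual ℝ X v) :=
  NormedSpace.Dual.toWeakDual_continuous.comp (inclusionInDoubleDual ℝ X).continuous

lemma dist_inclusionInDoubleDual (v w : X) :
    dist (inclusionInDoubleDual ℝ X v) (inclusionInDoubleDual ℝ X w) = dist v w :=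
  (inclusionInDoubleDualLi ℝ).dist_map v w

lemma weakStarClusterPoints_eq_pair_of_tendsto_two_mul {x : ℕ → X} {a b : X}
    (heven : Tendsto (fun k => x (2 * k)) atTop (𝓝 a))
    (hodd : Tendsto (fun k => x (2 * k + 1)) atTop (𝓝 b)) :
    weakStarClusterPoints x = {inclusionInDoubleDual ℝ X a, inclusionInDoubleDual ℝ X b} := by
  have hJ := continuous_toWeakDual_inclusionInDoubleDual (X := X)
  ext y
  simp only [weakStarClusterPoints, Set.mem_ofPred_eq, Set.mem_insert_iff,
    Set.mem_singleton_iff]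
  rw [mapClusterPt_atTop_iff_of_tendsto_two_mul
    (u := fun k => StrongDual.toWeakDual (inclusionInDoubleDual ℝ X (x k)))
    ((hJ.tendsto a).comp heven) ((hJ.tendsto b).comp hodd)]
  simp only [StrongDual.toWeakDual_inj]

lemma dHat_eq_zero_of_subset_range {A : Set (StrongDual ℝ (StrongDual ℝ X))}
    (hA : A ⊆ Set.range fun v : X => inclusionInDoubleDual ℝ X v) : dHat A = 0 := by
  have hzero : ∀ d ∈ (fun y => Metric.infDist y
      (Set.range fun v : X => inclusionInDoubleDual ℝ X v)) '' A, d = 0 := by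
    rintro _ ⟨y, hy, rfl⟩
    exact Metric.infDist_zero_of_mem (hA hy)
  exact le_antisymm (Real.sSup_nonpos fun d hd => (hzero d hd).le)
    (Real.sSup_nonneg fun d hd => (hzero d hd).ge)

end WeakStar

lemma norm_lp_single_one (k : ℕ) : ‖lp.single (E := fun _ : ℕ => ℝ) 1 k (1 : ℝ)‖ = 1 := by
  simp [lp.norm_single]

lemma tendsto_xSeq : Tendsto xSeq atTop (𝓝 0) := by
  refine squeeze_zero_norm (fun k => le_of_eq ?_) tendsto_one_div_add_atTop_nhds_zero_nat
  rw [xSeq, norm_smul, norm_lp_single_one, mul_one, Real.norm_of_nonneg (by positivity)]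

lemma tendsto_ySeq : Tendsto ySeq atTop (𝓝 (lp.single 1 0 (1 : ℝ))) := by
  have h := tendsto_xSeq.const_add (lp.single (E := fun _ : ℕ => ℝ) 1 0 (1 : ℝ))
  rwa [add_zero] at h

lemma zSeq_two_mul (k : ℕ) : zSeq (2 * k) = xSeq k := by
  simp [zSeq]

lemma zSeq_two_mul_add_one (k : ℕ) : zSeq (2 * k + 1) = ySeq k := by
  simp [zSeq, Nat.add_mod, Nat.add_div]

/-- Every weak* cluster point of `(z_k)` in `(ℓ¹)**` belongs to (the canonical
image of) `ℓ¹`, so `d̂(clust(z_k), ℓ¹) = 0`, yet `δ_{ℓ¹}(z_k) = diam (clust (z_k)) ≥ 1`. -/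
theorem statement6 :
    weakStarClusterPoints zSeq ⊆
      Set.range (fun v : lp (fun _ : ℕ => ℝ) 1 =>
        inclusionInDoubleDual ℝ (lp (fun _ : ℕ => ℝ) 1) v) ∧
    dHat (weakStarClusterPoints zSeq) = 0 ∧
    1 ≤ Metric.diam (weakStarClusterPoints zSeq) := by
  have hclust := weakStarClusterPoints_eq_pair_of_tendsto_two_mul (x := zSeq)
    (by simpa only [zSeq_two_mul] using tendsto_xSeq)
    (by simpa only [zSeq_two_mul_add_one] using tendsto_ySeq)
  have hsub : weakStarClusterPoints zSeq ⊆ Set.range (fun v : lp (fun _ : ℕ => ℝ) 1 =>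
      inclusionInDoubleDual ℝ (lp (fun _ : ℕ => ℝ) 1) v) := by
    rw [hclust]
    exact Set.insert_subset (Set.mem_range_self _)
      (Set.singleton_subset_iff.2 (Set.mem_range_self _))
  refine ⟨hsub, dHat_eq_zero_of_subset_range hsub, ?_⟩
  rw [hclust, Metric.diam_pair, dist_inclusionInDoubleDual, dist_zero_left, norm_lp_single_one]
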